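/- (Theorem 1.) Let S ⊆ {1,…,r} and suppose the full-horizon KKT conditions hold for some ω ∈ ℝ^r with ω ≠ 0 and ω_i = 0 for all i ∉ S, with some costates λ ∈ (ℝ^n)^T. Let 1 ≤ t ≤ t+l−1 ≤ T, and let (ω̂, λ̂) ∈ ℝ^r × ℝ^n be any element of the kernel of the recovery matrix H(t,l). If rank H(t,l) = r+n−1 and (ω̂, λ̂) ≠ 0, then there exists a constant c ≠ 0 such that ω̂ = c·ω; in particular ω̂_i = 0 for every i ∉ S and ω̂_i = c·ω_i for every i ∈ S. -/

import Mathlib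

/-!
Read row by row, the KKT conditions say that the costates obey the backward recursion
`λ_k = A_kᵀ λ_{k+1} + G_kᵀ ω` (with `λ_{T+1} = 0`) and the stationarity condition
`B_kᵀ λ_k + D_kᵀ ω = 0`. On the window `t, …, t+l-1` this reads
`F_x λ_win = Φ_x ω + V λ_{t+l}` and `F_u λ_win + Φ_u ω = 0`; as `F_x` is block triangular with
identity diagonal blocks, eliminating `λ_win` puts `(ω, λ_{t+l})` in the kernel of `H(t,l)`.
The rank hypothesis makes that kernel a line, spanned by `(ω, λ_{t+l})` since `ω ≠ 0`.
-/

open Matrix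

noncomputable section

variable {n m r : ℕ}

/-- Block upper bidiagonal matrix `F_x(t,l)` (0-based block indices): diagonal blocks are
`I_n`, and block `(i, i+1)` is `-(A (t+i))ᵀ`. -/
def Fx (A : ℕ → Matrix (Fin n) (Fin n) ℝ) (t l : ℕ) :
    Matrix (Fin l × Fin n) (Fin l × Fin n) ℝ :=
  fun ip jq =>
    if ip.1 = jq.1 then (if ip.2 = jq.2 then (1 : ℝ) else 0)
    else if (jq.1 : ℕ) = (ip.1 : ℕ) + 1 then -((A (t + (ip.1 : ℕ)))ᵀ ip.2 jq.2)
    else 0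

/-- Block diagonal matrix `F_u(t,l)` with diagonal blocks `(B (t+i))ᵀ`. -/
def Fu (B : ℕ → Matrix (Fin n) (Fin m) ℝ) (t l : ℕ) :
    Matrix (Fin l × Fin m) (Fin l × Fin n) ℝ :=
  fun ip jq => if ip.1 = jq.1 then (B (t + (ip.1 : ℕ)))ᵀ ip.2 jq.2 else 0

/-- Vertical stack `Φ_x(t,l)` of the blocks `(G (t+i))ᵀ`. -/
def Phix (G : ℕ → Matrix (Fin r) (Fin n) ℝ) (t l : ℕ) :
    Matrix (Fin l × Fin n) (Fin r) ℝ :=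
  fun ip q => (G (t + (ip.1 : ℕ)))ᵀ ip.2 q

/-- Vertical stack `Φ_u(t,l)` of the blocks `(D (t+i))ᵀ`. -/
def Phiu (D : ℕ → Matrix (Fin r) (Fin m) ℝ) (t l : ℕ) :
    Matrix (Fin l × Fin m) (Fin r) ℝ :=
  fun ip q => (D (t + (ip.1 : ℕ)))ᵀ ip.2 q

/-- `V(t,l)`: all `n×n` blocks zero except the last one, which is `(A (t+l-1))ᵀ`. -/
def Vm (A : ℕ → Matrix (Fin n) (Fin n) ℝ) (t l : ℕ) :
    Matrix (Fin l × Fin n) (Fin n) ℝ :=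
  fun ip q => if (ip.1 : ℕ) = l - 1 then (A (t + l - 1))ᵀ ip.2 q else 0

/-- `H₁(t,l) = F_u(t,l) · F_x(t,l)⁻¹ · Φ_x(t,l) + Φ_u(t,l)`. -/
def H1m (A : ℕ → Matrix (Fin n) (Fin n) ℝ) (B : ℕ → Matrix (Fin n) (Fin m) ℝ)
    (G : ℕ → Matrix (Fin r) (Fin n) ℝ) (D : ℕ → Matrix (Fin r) (Fin m) ℝ) (t l : ℕ) :
    Matrix (Fin l × Fin m) (Fin r) ℝ :=
  Fu B t l * (Fx A t l)⁻¹ * Phix G t l + Phiu D t l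

/-- `H₂(t,l) = F_u(t,l) · F_x(t,l)⁻¹ · V(t,l)`. -/
def H2m (A : ℕ → Matrix (Fin n) (Fin n) ℝ) (B : ℕ → Matrix (Fin n) (Fin m) ℝ) (t l : ℕ) :
    Matrix (Fin l × Fin m) (Fin n) ℝ :=
  Fu B t l * (Fx A t l)⁻¹ * Vm A t l

/-- The recovery matrix `H(t,l) = [H₁(t,l)  H₂(t,l)]`. -/
def Hm (A : ℕ → Matrix (Fin n) (Fin n) ℝ) (B : ℕ → Matrix (Fin n) (Fin m) ℝ)
    (G : ℕ → Matrix (Fin r) (Fin n) ℝ) (D : ℕ → Matrix (Fin r) (Fin m) ℝ) (t l : ℕ) :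
    Matrix (Fin l × Fin m) (Fin r ⊕ Fin n) ℝ :=
  fromCols (H1m A B G D t l) (H2m A B t l)

/-- Stack the vectors `lam t, lam (t+1), …, lam (t+l-1)` into a vector in `ℝ^{nl}`. -/
def stackVec (lam : ℕ → Fin n → ℝ) (t l : ℕ) : Fin l × Fin n → ℝ :=
  fun ip => lam (t + (ip.1 : ℕ)) ip.2

/-- Full-horizon KKT conditions for the weight vector `ω` with costates `lam 1, …, lam T`. -/
def KKT (A : ℕ → Matrix (Fin n) (Fin n) ℝ) (B : ℕ → Matrix (Fin n) (Fin m) ℝ)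
    (G : ℕ → Matrix (Fin r) (Fin n) ℝ) (D : ℕ → Matrix (Fin r) (Fin m) ℝ) (T : ℕ)
    (ω : Fin r → ℝ) (lam : ℕ → Fin n → ℝ) : Prop :=
  -(Fx A 1 T *ᵥ stackVec lam 1 T) + Phix G 1 T *ᵥ ω = 0 ∧
    Fu B 1 T *ᵥ stackVec lam 1 T + Phiu D 1 T *ᵥ ω = 0

/-- The natural identification of `ℝ^{(l+1)·ι}`-indices with `ℝ^{l·ι} × ℝ^{ι}`-indices. -/
def splitIdx (l : ℕ) (ι : Type*) : Fin (l + 1) × ι → (Fin l × ι) ⊕ ι :=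
  fun ip => if h : (ip.1 : ℕ) < l then Sum.inl (⟨ip.1, h⟩, ip.2) else Sum.inr ip.2

theorem Matrix.exists_smul_eq_of_rank_eq_card_sub_one {K α β : Type*} [Field K] [Fintype β]
    (M : Matrix α β K) (hM : M.rank = Fintype.card β - 1) {x y : β → K}
    (hx : M *ᵥ x = 0) (hx0 : x ≠ 0) (hy : M *ᵥ y = 0) : ∃ c : K, c • x = y := by
  have hcard : 0 < Fintype.card β := by
    obtain ⟨b, -⟩ := Function.ne_iff.mp hx0
    exact Fintype.card_pos_iff.mpr ⟨b⟩
  have hker : Module.finrank K (LinearMap.ker M.mulVecLin) = 1 := by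
    have := LinearMap.finrank_range_add_finrank_ker M.mulVecLin
    rw [Module.finrank_fintype_fun_eq_card] at this
    change M.rank + _ = _ at this
    omega
  obtain ⟨c, hc⟩ := (finrank_eq_one_iff_of_nonzero' (⟨x, hx⟩ : LinearMap.ker M.mulVecLin)
    fun h => hx0 (congrArg Subtype.val h)).mp hker ⟨y, hy⟩
  exact ⟨c, congrArg Subtype.val hc⟩

section

variable (A : ℕ → Matrix (Fin n) (Fin n) ℝ) (B : ℕ → Matrix (Fin n) (Fin m) ℝ)
  (G : ℕ → Matrix (Fin r) (Fin n) ℝ) (D : ℕ → Matrix (Fin r) (Fin m) ℝ) (t l : ℕ)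

theorem Fx_mulVec_stackVec_apply (μ : ℕ → Fin n → ℝ) (i : Fin l) (p : Fin n) :
    (Fx A t l *ᵥ stackVec μ t l) (i, p) =
      μ (t + i) p - if (i : ℕ) + 1 < l then ((A (t + i))ᵀ *ᵥ μ (t + i + 1)) p else 0 := by
  have row (j : Fin l) : ∑ q, Fx A t l (i, p) (j, q) * μ (t + j) q =
      (if (j : ℕ) = i then μ (t + i) p else 0) -
        if (j : ℕ) = i + 1 then ((A (t + i))ᵀ *ᵥ μ (t + j)) p else 0 := by
    by_cases hij : i = j
    · subst hij
      simp [Fx]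
    · have hij' : (j : ℕ) ≠ i := fun h => hij (Fin.ext h.symm)
      by_cases hsucc : (j : ℕ) = i + 1 <;> simp [Fx, hij, hij', hsucc, mulVec, dotProduct]
  simp only [mulVec, dotProduct, Fintype.sum_prod_type, stackVec]
  rw [Finset.sum_congr rfl fun j _ => row j, Finset.sum_sub_distrib,
    Fin.sum_univ_eq_sum_range (fun k => if k = i then μ (t + i) p else 0),
    Fin.sum_univ_eq_sum_range (fun k => if k = i + 1 then ((A (t + i))ᵀ *ᵥ μ (t + k)) p else 0),
    Finset.sum_ite_eq', Finset.sum_ite_eq']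
  simp [add_assoc, mulVec, dotProduct]

theorem Fu_mulVec_stackVec_apply (μ : ℕ → Fin n → ℝ) (i : Fin l) (p : Fin m) :
    (Fu B t l *ᵥ stackVec μ t l) (i, p) = ((B (t + i))ᵀ *ᵥ μ (t + i)) p := by
  simp only [mulVec, dotProduct, Fintype.sum_prod_type, Fu, stackVec]
  rw [Finset.sum_eq_single i (fun j _ hj => by simp [Ne.symm hj]) (by simp)]
  simp

theorem Phix_mulVec_apply (ω : Fin r → ℝ) (i : Fin l) (p : Fin n) :
    (Phix G t l *ᵥ ω) (i, p) = ((G (t + i))ᵀ *ᵥ ω) p := rfl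

theorem Phiu_mulVec_apply (ω : Fin r → ℝ) (i : Fin l) (p : Fin m) :
    (Phiu D t l *ᵥ ω) (i, p) = ((D (t + i))ᵀ *ᵥ ω) p := rfl

theorem Vm_mulVec_apply (x : Fin n → ℝ) (i : Fin l) (p : Fin n) :
    (Vm A t l *ᵥ x) (i, p) = if (i : ℕ) = l - 1 then ((A (t + l - 1))ᵀ *ᵥ x) p else 0 := by
  by_cases h : (i : ℕ) = l - 1 <;> simp [Vm, mulVec, dotProduct, h]

theorem Fx_blockTriangular : (Fx A t l).BlockTriangular Prod.fst := by
  rintro ⟨i, p⟩ ⟨j, q⟩ (h : j < i)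
  have hij : i ≠ j := h.ne'
  have hsucc : (j : ℕ) ≠ i + 1 := by omega
  simp [Fx, hij, hsucc]

theorem det_Fx : (Fx A t l).det = 1 := by
  rw [(Fx_blockTriangular A t l).det]
  refine Finset.prod_eq_one fun a _ => ?_
  have hblock : (Fx A t l).toSquareBlock Prod.fst a = 1 := by
    ext ⟨⟨i, p⟩, hi : i = a⟩ ⟨⟨j, q⟩, hj : j = a⟩
    subst hi hj
    simp [toSquareBlock_def, Fx, one_apply]
  rw [hblock, det_one]

theorem Hm_mulVec_sumElim_eq_zero {v : Fin l × Fin n → ℝ} {ω : Fin r → ℝ} {μ : Fin n → ℝ}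
    (hx : Fx A t l *ᵥ v = Phix G t l *ᵥ ω + Vm A t l *ᵥ μ)
    (hu : Fu B t l *ᵥ v + Phiu D t l *ᵥ ω = 0) :
    Hm A B G D t l *ᵥ Sum.elim ω μ = 0 := by
  have hv : v = (Fx A t l)⁻¹ *ᵥ (Phix G t l *ᵥ ω + Vm A t l *ᵥ μ) := by
    rw [← hx, mulVec_mulVec, nonsing_inv_mul _ (by simp [det_Fx]), one_mulVec]
  rw [← hu, hv, Hm, fromCols_mulVec_sumElim, H1m, H2m]
  simp only [add_mulVec, ← mulVec_mulVec, mulVec_add]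
  abel

end

-- Extending by zero makes the backward recursion uniform up to `k = T`, the block row of
-- `F_x(1,T)` without a superdiagonal block.
def costateExt (T : ℕ) (lam : ℕ → Fin n → ℝ) (k : ℕ) : Fin n → ℝ :=
  if k ≤ T then lam k else 0

namespace KKT

variable {A : ℕ → Matrix (Fin n) (Fin n) ℝ} {B : ℕ → Matrix (Fin n) (Fin m) ℝ}
  {G : ℕ → Matrix (Fin r) (Fin n) ℝ} {D : ℕ → Matrix (Fin r) (Fin m) ℝ} {T : ℕ}
  {ω : Fin r → ℝ} {lam : ℕ → Fin n → ℝ}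

theorem costate_eq (h : KKT A B G D T ω lam) {k : ℕ} (hk : 1 ≤ k) (hkT : k ≤ T) :
    lam k = (A k)ᵀ *ᵥ costateExt T lam (k + 1) + (G k)ᵀ *ᵥ ω := by
  obtain ⟨j, rfl⟩ := Nat.exists_eq_add_of_le hk
  funext p
  have row := congrFun h.1 (⟨j, by omega⟩, p)
  rw [Pi.add_apply, Pi.neg_apply, Fx_mulVec_stackVec_apply, Phix_mulVec_apply] at row
  by_cases hj : j + 1 < T
  · rw [if_pos hj] at row
    rw [costateExt, if_pos (by omega)]
    simp only [Pi.add_apply, Pi.zero_apply] at row ⊢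
    linarith
  · rw [if_neg hj] at row
    rw [costateExt, if_neg (by omega)]
    simp only [Pi.add_apply, Pi.zero_apply, mulVec_zero] at row ⊢
    linarith

theorem stationarity (h : KKT A B G D T ω lam) {k : ℕ} (hk : 1 ≤ k) (hkT : k ≤ T) :
    (B k)ᵀ *ᵥ lam k + (D k)ᵀ *ᵥ ω = 0 := by
  obtain ⟨j, rfl⟩ := Nat.exists_eq_add_of_le hk
  funext p
  simpa [Fu_mulVec_stackVec_apply, Phiu_mulVec_apply] using congrFun h.2 (⟨j, by omega⟩, p)

variable {t l : ℕ}

theorem Fx_mulVec_stackVec (h : KKT A B G D T ω lam) (ht : 1 ≤ t) (htl : t + l - 1 ≤ T) :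
    Fx A t l *ᵥ stackVec lam t l = Phix G t l *ᵥ ω + Vm A t l *ᵥ costateExt T lam (t + l) := by
  funext ⟨i, p⟩
  have row := congrFun (h.costate_eq (k := t + i) (by omega) (by omega)) p
  rw [Fx_mulVec_stackVec_apply, Pi.add_apply, Phix_mulVec_apply, Vm_mulVec_apply]
  simp only [Pi.add_apply] at row
  by_cases hi : (i : ℕ) + 1 < l
  · rw [costateExt, if_pos (by omega)] at row
    rw [if_pos hi, if_neg (by omega)]
    linarith
  · rw [if_neg hi, if_pos (by omega)]
    have hlast : t + (i : ℕ) = t + l - 1 := by omega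
    rw [show t + i + 1 = t + l by omega, hlast] at row
    rw [hlast]
    linarith

theorem Fu_mulVec_stackVec_add (h : KKT A B G D T ω lam) (ht : 1 ≤ t) (htl : t + l - 1 ≤ T) :
    Fu B t l *ᵥ stackVec lam t l + Phiu D t l *ᵥ ω = 0 := by
  funext ⟨i, p⟩
  simpa [Fu_mulVec_stackVec_apply, Phiu_mulVec_apply] using
    congrFun (h.stationarity (k := t + i) (by omega) (by omega)) p

end KKT

theorem recovery_matrix_theorem_general (n m r T : ℕ)
    (A : ℕ → Matrix (Fin n) (Fin n) ℝ) (B : ℕ → Matrix (Fin n) (Fin m) ℝ)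
    (G : ℕ → Matrix (Fin r) (Fin n) ℝ) (D : ℕ → Matrix (Fin r) (Fin m) ℝ)
    (S : Finset (Fin r)) (ω : Fin r → ℝ) (hω : ω ≠ 0) (hsupp : ∀ i ∉ S, ω i = 0)
    (lam : ℕ → Fin n → ℝ) (hKKT : KKT A B G D T ω lam)
    (t l : ℕ) (ht : 1 ≤ t) (htl : t + l - 1 ≤ T)
    (ωh : Fin r → ℝ) (lamh : Fin n → ℝ)
    (hker : Hm A B G D t l *ᵥ Sum.elim ωh lamh = 0)
    (hrank : (Hm A B G D t l).rank = r + n - 1)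
    (hne : Sum.elim ωh lamh ≠ 0) :
    ∃ c : ℝ, c ≠ 0 ∧ ωh = c • ω ∧ (∀ i ∉ S, ωh i = 0) ∧ ∀ i ∈ S, ωh i = c * ω i := by
  have hmem : Hm A B G D t l *ᵥ Sum.elim ω (costateExt T lam (t + l)) = 0 :=
    Hm_mulVec_sumElim_eq_zero A B G D t l (hKKT.Fx_mulVec_stackVec ht htl)
      (hKKT.Fu_mulVec_stackVec_add ht htl)
  have hmem_ne : Sum.elim ω (costateExt T lam (t + l)) ≠ 0 := fun h =>
    hω (funext fun i => by simpa using congrFun h (Sum.inl i))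
  obtain ⟨c, hc⟩ := (Hm A B G D t l).exists_smul_eq_of_rank_eq_card_sub_one
    (by simpa using hrank) hmem hmem_ne hker
  have hc0 : c ≠ 0 := by
    rintro rfl
    exact hne (by rw [← hc, zero_smul])
  have hωh : ωh = c • ω := funext fun i => by simpa using (congrFun hc (Sum.inl i)).symm
  exact ⟨c, hc0, hωh, fun i hi => by simp [hωh, hsupp i hi], fun i _ => by simp [hωh]⟩

/-- Theorem 1: if the full-horizon KKT conditions hold for some nonzero `ω` supported on
`S`, and `rank H(t,l) = r+n−1`, then any nonzero kernel element `(ω̂, λ̂)` of `H(t,l)` has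
`ω̂ = c·ω` for some `c ≠ 0`; in particular `ω̂ᵢ = 0` off `S` and `ω̂ᵢ = c·ωᵢ` on `S`. -/
theorem recovery_matrix_theorem (n m r T : ℕ) (hn : 0 < n) (hm : 0 < m) (hr : 0 < r) (hT : 1 ≤ T)
    (A : ℕ → Matrix (Fin n) (Fin n) ℝ) (B : ℕ → Matrix (Fin n) (Fin m) ℝ)
    (G : ℕ → Matrix (Fin r) (Fin n) ℝ) (D : ℕ → Matrix (Fin r) (Fin m) ℝ)
    (hAT : A T = 1)
    (S : Finset (Fin r)) (ω : Fin r → ℝ) (hω : ω ≠ 0) (hsupp : ∀ i ∉ S, ω i = 0)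
    (lam : ℕ → Fin n → ℝ) (hKKT : KKT A B G D T ω lam)
    (t l : ℕ) (ht : 1 ≤ t) (hl : 1 ≤ l) (htl : t + l - 1 ≤ T)
    (ωh : Fin r → ℝ) (lamh : Fin n → ℝ)
    (hker : Hm A B G D t l *ᵥ Sum.elim ωh lamh = 0)
    (hrank : (Hm A B G D t l).rank = r + n - 1)
    (hne : Sum.elim ωh lamh ≠ 0) :
    ∃ c : ℝ, c ≠ 0 ∧ ωh = c • ω ∧ (∀ i ∉ S, ωh i = 0) ∧ ∀ i ∈ S, ωh i = c * ω i :=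
  recovery_matrix_theorem_general n m r T A B G D S ω hω hsupp lam hKKT t l ht htl ωh lamh hker
    hrank hne

end
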